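/- arXiv:2510.26712 — 5 statements merged into one kernel-verified Lean document; each statement's English description precedes it below -/
import Mathlib

section
/- (Proposition 2) Let ℐ = ⟦C, Δ⟧ ⊂ ℝ^{l×p} be an interval matrix and ℳ = ⟨M_C; G^{(1)}, …, G^{(g)}⟩ ⊂ ℝ^{p×q} a matrix zonotope. Set F = Δ(|M_C| + Σ_{j=1}^{g} |G^{(j)}|) ∈ ℝ^{l×q}. Then for every N ∈ ℐ and every M ∈ ℳ, the product NM can be written as NM = C M_C + Σ_{i=1}^{g} β_i C G^{(i)} + E for some scalars β_i with |β_i| ≤ 1 and some matrix E with |E| ≤ F entrywise. In other words, the exact set product ℐℳ is contained in the matrix zonotope with center C M_C, generators C G^{(1)}, …, C G^{(g)}, and additional generators given by the entrywise decomposition of F. -/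
/-- Entrywise absolute value of a matrix. -/
def eabs {p q : Type*} (M : Matrix p q ℝ) : Matrix p q ℝ := fun i j => |M i j|

/-- The matrix zonotope with center `MC` and generators `G 0, …, G (g-1)`. -/
def matZonotope {p q g : ℕ} (MC : Matrix (Fin p) (Fin q) ℝ)
    (G : Fin g → Matrix (Fin p) (Fin q) ℝ) : Set (Matrix (Fin p) (Fin q) ℝ) :=
  {M | ∃ β : Fin g → ℝ, (∀ i, |β i| ≤ 1) ∧ M = MC + ∑ i, β i • G i}

/-!
Split `N * M = C * M + (N - C) * M`. Expanding `M = MC + ∑ βᵢ Gᵢ` in the first summand gives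
the center and generators `C * Gᵢ` with the same coefficients `βᵢ`; the second summand is the
error `E`, bounded by `|N - C| |M| ≤ Δ (|MC| + ∑ |Gᵢ|)` since `|M| ≤ |MC| + ∑ |Gᵢ|` entrywise.
-/

section EntrywiseBounds

variable {l m n : Type*} [Fintype m]

theorem abs_mul_apply_le_eabs_mul_eabs (A : Matrix l m ℝ) (B : Matrix m n ℝ) (i : l) (j : n) :
    |(A * B) i j| ≤ (eabs A * eabs B) i j := by
  simp only [Matrix.mul_apply, eabs, ← abs_mul]
  exact Finset.abs_sum_le_sum_abs _ _

theorem mul_apply_le_mul_apply {A A' : Matrix l m ℝ} {B B' : Matrix m n ℝ}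
    (hA : ∀ i k, A i k ≤ A' i k) (hB : ∀ k j, B k j ≤ B' k j)
    (hB₀ : ∀ k j, 0 ≤ B k j) (hA'₀ : ∀ i k, 0 ≤ A' i k) (i : l) (j : n) :
    (A * B) i j ≤ (A' * B') i j :=
  Finset.sum_le_sum fun k _ => mul_le_mul (hA i k) (hB k j) (hB₀ k j) (hA'₀ i k)

end EntrywiseBounds

theorem abs_apply_le_of_mem_matZonotope {p q g : ℕ} {MC : Matrix (Fin p) (Fin q) ℝ}
    {G : Fin g → Matrix (Fin p) (Fin q) ℝ} {M : Matrix (Fin p) (Fin q) ℝ}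
    (hM : M ∈ matZonotope MC G) (k : Fin p) (j : Fin q) :
    |M k j| ≤ (eabs MC + ∑ i, eabs (G i)) k j := by
  obtain ⟨β, hβ, rfl⟩ := hM
  calc |(MC + ∑ i, β i • G i) k j| = |MC k j + ∑ i, β i * G i k j| := by
        simp only [Matrix.add_apply, Matrix.sum_apply, Matrix.smul_apply, smul_eq_mul]
    _ ≤ |MC k j| + ∑ i, |β i * G i k j| :=
        (abs_add_le _ _).trans (add_le_add_right (Finset.abs_sum_le_sum_abs _ _) _)
    _ ≤ |MC k j| + ∑ i, |G i k j| := by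
        refine add_le_add_right (Finset.sum_le_sum fun i _ => ?_) _
        rw [abs_mul]
        exact mul_le_of_le_one_left (abs_nonneg _) (hβ i)
    _ = (eabs MC + ∑ i, eabs (G i)) k j := by
        simp only [Matrix.add_apply, Matrix.sum_apply, eabs]

/-- (Proposition 2) Let `ℐ = ⟦C, Δ⟧` be an interval matrix and
`ℳ = ⟨MC; G⁽¹⁾, …, G⁽ᵍ⁾⟩` a matrix zonotope, and set
`F = Δ(|MC| + Σⱼ |G⁽ʲ⁾|)`. Then for every `N ∈ ℐ` and every `M ∈ ℳ`, the product
`NM` can be written as `NM = C·MC + Σᵢ βᵢ C G⁽ⁱ⁾ + E` with `|βᵢ| ≤ 1` and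
`|E| ≤ F` entrywise; i.e. `ℐℳ ⊆ 𝕋_ℐ(ℳ)`. -/
theorem interval_times_zonotope_overapprox {l p q g : ℕ}
    (C Δ : Matrix (Fin l) (Fin p) ℝ) (hΔ : ∀ i j, 0 ≤ Δ i j)
    (MC : Matrix (Fin p) (Fin q) ℝ) (G : Fin g → Matrix (Fin p) (Fin q) ℝ)
    (F : Matrix (Fin l) (Fin q) ℝ)
    (hF : F = Δ * (eabs MC + ∑ j, eabs (G j)))
    (N : Matrix (Fin l) (Fin p) ℝ) (hN : ∀ i j, |N i j - C i j| ≤ Δ i j)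
    (M : Matrix (Fin p) (Fin q) ℝ) (hM : M ∈ matZonotope MC G) :
    ∃ (β : Fin g → ℝ) (E : Matrix (Fin l) (Fin q) ℝ),
      (∀ i, |β i| ≤ 1) ∧ (∀ i j, |E i j| ≤ F i j) ∧
      N * M = C * MC + (∑ i, β i • (C * G i)) + E := by
  obtain ⟨β, hβ, hMβ⟩ := id hM
  have hCM : C * M = C * MC + ∑ i, β i • (C * G i) := by
    simp only [hMβ, Matrix.mul_add, Matrix.mul_sum, Matrix.mul_smul]
  refine ⟨β, (N - C) * M, hβ, fun i j => ?_, ?_⟩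
  · subst hF
    calc |((N - C) * M) i j| ≤ (eabs (N - C) * eabs M) i j :=
          abs_mul_apply_le_eabs_mul_eabs _ _ i j
      _ ≤ (Δ * (eabs MC + ∑ j, eabs (G j))) i j :=
          mul_apply_le_mul_apply hN (abs_apply_le_of_mem_matZonotope hM)
            (fun _ _ => abs_nonneg _) hΔ i j
  · rw [← hCM, ← Matrix.add_mul, add_sub_cancel]
end

section
/- (Lemma 1 combined with the iterated over-approximation property) Let Â_K ∈ ℝ^{n×n}, let Δ_K ∈ ℝ^{n×n} and Δ_S ∈ ℝ^{n×(n+m)} be entrywise nonnegative, and define matrices F_j ∈ ℝ^{n×(n+m)} by F_0 = Δ_S and F_{j+1} = Δ_K Σ_{i=0}^{j} |Â_K^{j−i}| F_i for j ≥ 0, and set R_j = Σ_{i=0}^{j} |Â_K^{j−i}| F_i. Then for every j ∈ ℕ, every A ∈ ℝ^{n×n} with |A − Â_K| ≤ Δ_K entrywise, and every D ∈ ℝ^{n×(n+m)} with |D| ≤ Δ_S entrywise, one has |A^j D| ≤ R_j entrywise. -/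
theorem pow_eq_sum_pow_mul_sub_mul_pow_add_pow {R : Type*} [Ring R] (a b : R) (n : ℕ) :
    a ^ n = ∑ i ∈ Finset.range n, b ^ (n - 1 - i) * (a - b) * a ^ i + b ^ n := by
  induction n with
  | zero => simp
  | succ n ih =>
    have hsum : ∑ i ∈ Finset.range n, b ^ (n + 1 - 1 - i) * (a - b) * a ^ i
        = b * ∑ i ∈ Finset.range n, b ^ (n - 1 - i) * (a - b) * a ^ i := by
      rw [Finset.mul_sum]
      refine Finset.sum_congr rfl fun i hi => ?_
      rw [← mul_assoc, ← mul_assoc, ← pow_succ', Nat.add_sub_cancel]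
      congr 3
      have := Finset.mem_range.mp hi
      omega
    rw [Finset.sum_range_succ, hsum, Nat.add_sub_cancel, Nat.sub_self, pow_zero, one_mul,
      pow_succ', pow_succ', add_right_comm, ← mul_add, ← ih, sub_mul, add_sub_cancel]

namespace Matrix

variable {ι κ μ α : Type*}

def AbsLE [Lattice α] [AddGroup α] (M N : Matrix ι κ α) : Prop := ∀ i k, |M i k| ≤ N i k

section Additive

variable [AddCommGroup α] [LinearOrder α] [IsOrderedAddMonoid α]

theorem AbsLE.add {M M' N N' : Matrix ι κ α} (hM : AbsLE M N) (hM' : AbsLE M' N') :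
    AbsLE (M + M') (N + N') := fun i k =>
  (abs_add_le _ _).trans (add_le_add (hM i k) (hM' i k))

theorem AbsLE.sum {σ : Type*} {s : Finset σ} {M N : σ → Matrix ι κ α}
    (h : ∀ p ∈ s, AbsLE (M p) (N p)) : AbsLE (∑ p ∈ s, M p) (∑ p ∈ s, N p) := fun i k => by
  simp only [Matrix.sum_apply]
  exact (Finset.abs_sum_le_sum_abs _ _).trans (Finset.sum_le_sum fun p hp => h p hp i k)

end Additive

theorem AbsLE.mul [Ring α] [LinearOrder α] [IsOrderedRing α] [Fintype κ]
    {M M' : Matrix ι κ α} {N N' : Matrix κ μ α} (hM : AbsLE M M') (hN : AbsLE N N') :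
    AbsLE (M * N) (M' * N') := fun i k => by
  simp only [Matrix.mul_apply]
  refine (Finset.abs_sum_le_sum_abs _ _).trans (Finset.sum_le_sum fun l _ => ?_)
  rw [abs_mul]
  exact mul_le_mul (hM i l) (hN l k) (abs_nonneg _) ((abs_nonneg _).trans (hM i l))

theorem absLE_eabs (M : Matrix ι κ ℝ) : AbsLE M (eabs M) := fun _ _ => le_rfl

end Matrix

open Matrix in
theorem iterated_overapprox_bound_general {n m : ℕ}
    (AhatK ΔK : Matrix (Fin n) (Fin n) ℝ) (ΔS : Matrix (Fin n) (Fin (n + m)) ℝ)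
    (F : ℕ → Matrix (Fin n) (Fin (n + m)) ℝ)
    (hF0 : F 0 = ΔS)
    (hFs : ∀ j, F (j + 1) = ΔK * ∑ i ∈ Finset.range (j + 1), eabs (AhatK ^ (j - i)) * F i)
    (R : ℕ → Matrix (Fin n) (Fin (n + m)) ℝ)
    (hR : ∀ j, R j = ∑ i ∈ Finset.range (j + 1), eabs (AhatK ^ (j - i)) * F i) :
    ∀ (j : ℕ) (A : Matrix (Fin n) (Fin n) ℝ) (D : Matrix (Fin n) (Fin (n + m)) ℝ),
      (∀ i k, |A i k - AhatK i k| ≤ ΔK i k) → (∀ i k, |D i k| ≤ ΔS i k) →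
      ∀ i k, |(A ^ j * D) i k| ≤ R j i k := by
  intro j A D hA hD
  induction j using Nat.strong_induction_on with
  | _ j ih =>
  show AbsLE (A ^ j * D) (R j)
  have herror : ∀ p < j, AbsLE ((A - AhatK) * (A ^ p * D)) (F (p + 1)) := fun p hp => by
    rw [hFs, ← hR]
    exact AbsLE.mul hA (ih p hp)
  rw [hR, Finset.sum_range_succ', pow_eq_sum_pow_mul_sub_mul_pow_add_pow A AhatK,
    Matrix.add_mul, Matrix.sum_mul, hF0]
  refine AbsLE.add (AbsLE.sum fun p hp => ?_) ((absLE_eabs _).mul hD)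
  rw [Matrix.mul_assoc, Matrix.mul_assoc, Nat.sub_sub, add_comm 1 p]
  exact (absLE_eabs _).mul (herror p (Finset.mem_range.mp hp))

/-- (Lemma 1 combined with the iterated over-approximation property)
With `F 0 = Δ_S`, `F (j+1) = Δ_K Σ_{i=0}^{j} |Ahat_K^{j−i}| F i` and
`R j = Σ_{i=0}^{j} |Ahat_K^{j−i}| F i`, for every `j`, every `A` with
`|A − Ahat_K| ≤ Δ_K` entrywise and every `D` with `|D| ≤ Δ_S` entrywise, one has
`|A^j D| ≤ R j` entrywise. -/
theorem iterated_overapprox_bound {n m : ℕ}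
    (AhatK ΔK : Matrix (Fin n) (Fin n) ℝ) (ΔS : Matrix (Fin n) (Fin (n + m)) ℝ)
    (hΔK : ∀ i j, 0 ≤ ΔK i j) (hΔS : ∀ i j, 0 ≤ ΔS i j)
    (F : ℕ → Matrix (Fin n) (Fin (n + m)) ℝ)
    (hF0 : F 0 = ΔS)
    (hFs : ∀ j, F (j + 1) = ΔK * ∑ i ∈ Finset.range (j + 1), eabs (AhatK ^ (j - i)) * F i)
    (R : ℕ → Matrix (Fin n) (Fin (n + m)) ℝ)
    (hR : ∀ j, R j = ∑ i ∈ Finset.range (j + 1), eabs (AhatK ^ (j - i)) * F i) :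
    ∀ (j : ℕ) (A : Matrix (Fin n) (Fin n) ℝ) (D : Matrix (Fin n) (Fin (n + m)) ℝ),
      (∀ i k, |A i k - AhatK i k| ≤ ΔK i k) → (∀ i k, |D i k| ≤ ΔS i k) →
      ∀ i k, |(A ^ j * D) i k| ≤ R j i k :=
  iterated_overapprox_bound_general AhatK ΔK ΔS F hF0 hFs R hR
end

section
/- (Lemma 2) Let Â_K ∈ ℝ^{n×n}, let Δ_K ∈ ℝ^{n×n} and Δ_S ∈ ℝ^{n×(n+m)} be entrywise nonnegative, and define F_j ∈ ℝ^{n×(n+m)} by F_0 = Δ_S and F_{j+1} = Δ_K Σ_{i=0}^{j} |Â_K^{j−i}| F_i for j ≥ 0. Define P_j ∈ ℝ^{n×n} by P_1 = I_n and P_{j+1} = |Â_K^{j}| + Σ_{h=1}^{j} P_h Δ_K |Â_K^{j−h}| for j ≥ 1. Then F_j = Δ_K P_j Δ_S for all j ≥ 1. -/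
open Finset PowerSeries

theorem eabs_one {p : Type*} [DecidableEq p] : eabs (1 : Matrix p p ℝ) = 1 := by
  ext i j
  by_cases h : i = j <;> simp [eabs, Matrix.one_apply, h]

theorem Finset.sum_Icc_one_eq_sum_range {M : Type*} [AddCommMonoid M] (f : ℕ → M) (n : ℕ) :
    ∑ i ∈ Icc 1 n, f i = ∑ i ∈ range n, f (i + 1) := by
  rw [← Ico_add_one_right_eq_Icc, sum_Ico_eq_sum_range, add_tsub_cancel_right]
  simp only [add_comm]

namespace PowerSeries

variable {R : Type*} [Ring R]

theorem coeff_X_mul_mul_C_mul (a b : R⟦X⟧) (d : R) (n : ℕ) :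
    coeff n (X * (a * C d * b)) = ∑ i ∈ range n, coeff i a * d * coeff (n - (i + 1)) b := by
  cases n with
  | zero => simp
  | succ n =>
    rw [coeff_succ_X_mul, coeff_mul, Nat.sum_antidiagonal_eq_sum_range_succ
      (fun i k => coeff i (a * C d) * coeff k b)]
    simp only [coeff_mul_C, Nat.add_sub_add_right]

theorem coeff_X_mul_mul_C_mul' (a b : R⟦X⟧) (d : R) (n : ℕ) :
    coeff n (X * (a * C d * b)) = ∑ i ∈ range n, coeff (n - (i + 1)) a * d * coeff i b := by
  rw [coeff_X_mul_mul_C_mul, ← sum_range_reflect]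
  refine sum_congr rfl fun i hi => ?_
  rw [mem_range] at hi
  rw [show n - (n - 1 - i + 1) = i by omega, show n - 1 - i = n - (i + 1) by omega]

theorem eq_add_X_mul_mul_C_mul_comm {x p : R⟦X⟧} {d : R} (h : p = x + X * (p * C d * x)) :
    p = x + X * (x * C d * p) := by
  set u : R⟦X⟧ := 1 - X * (C d * x)
  have hu : IsUnit u := isUnit_iff_constantCoeff.mpr (by simp [u])
  have hX : ∀ q : R⟦X⟧, X * q = q * X := fun q => (commute_X q).symm.eq
  have hpu : p * u = x := by
    calc p * u = p - X * (p * C d * x) := by simp only [u, mul_sub, mul_one, hX]; noncomm_ring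
      _ = x := sub_eq_iff_eq_add.mpr h
  refine (hu.mul_left_inj.mp ?_).symm
  calc (x + X * (x * C d * p)) * u = x * u + X * (x * C d * (p * u)) := by
        simp only [add_mul, hX, mul_assoc]
    _ = p * u := by rw [hpu]; simp only [u, mul_sub, mul_one, hX]; noncomm_ring

end PowerSeries

theorem eq_add_sum_mul_mul_symm {R : Type*} [Ring R] (x p : ℕ → R) (d : R)
    (hp : ∀ n, p n = x n + ∑ i ∈ range n, p i * d * x (n - (i + 1))) (n : ℕ) :
    p n = x n + ∑ i ∈ range n, x (n - (i + 1)) * d * p i := by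
  have h : PowerSeries.mk p
      = PowerSeries.mk x + X * (PowerSeries.mk p * C d * PowerSeries.mk x) := by
    ext n
    simp only [map_add, coeff_mk, coeff_X_mul_mul_C_mul]
    exact hp n
  simpa only [map_add, coeff_mk, coeff_X_mul_mul_C_mul'] using
    congrArg (coeff n) (eq_add_X_mul_mul_C_mul_comm h)

theorem Matrix.eq_mul_mul_of_eq_mul_sum {ι κ R : Type*} [Fintype ι] [DecidableEq ι] [Ring R]
    (x p : ℕ → Matrix ι ι R) (D : Matrix ι ι R) (S : Matrix ι κ R) (F : ℕ → Matrix ι κ R)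
    (hF0 : F 0 = S) (hF : ∀ n, F (n + 1) = D * ∑ i ∈ range (n + 1), x (n - i) * F i)
    (hp : ∀ n, p n = x n + ∑ i ∈ range n, x (n - (i + 1)) * D * p i) (n : ℕ) :
    F (n + 1) = D * p n * S := by
  induction n using Nat.strong_induction_on with
  | _ n ih =>
    have hsum : ∑ i ∈ range n, x (n - (i + 1)) * F (i + 1)
        = ∑ i ∈ range n, x (n - (i + 1)) * D * p i * S :=
      sum_congr rfl fun i hi => by simp only [ih i (mem_range.mp hi), Matrix.mul_assoc]
    rw [hF, sum_range_succ', hsum, Nat.sub_zero, hF0, hp n, Matrix.mul_assoc D, Matrix.add_mul,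
      Matrix.sum_mul, add_comm]

theorem lemma2_F_eq_DeltaK_P_DeltaS_general {n m : ℕ}
    (AhatK ΔK : Matrix (Fin n) (Fin n) ℝ) (ΔS : Matrix (Fin n) (Fin (n + m)) ℝ)
    (F : ℕ → Matrix (Fin n) (Fin (n + m)) ℝ)
    (hF0 : F 0 = ΔS)
    (hFs : ∀ j, F (j + 1) = ΔK * ∑ i ∈ Finset.range (j + 1), eabs (AhatK ^ (j - i)) * F i)
    (P : ℕ → Matrix (Fin n) (Fin n) ℝ)
    (hP1 : P 1 = 1)
    (hPs : ∀ j, 1 ≤ j →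
      P (j + 1) = eabs (AhatK ^ j) + ∑ h ∈ Finset.Icc 1 j, P h * ΔK * eabs (AhatK ^ (j - h))) :
    ∀ j, 1 ≤ j → F j = ΔK * P j * ΔS := by
  have hleft : ∀ k, P (k + 1) = eabs (AhatK ^ k)
      + ∑ i ∈ range k, P (i + 1) * ΔK * eabs (AhatK ^ (k - (i + 1))) := by
    rintro (_ | k)
    · simp [hP1, eabs_one]
    · rw [hPs (k + 1) k.succ_pos, sum_Icc_one_eq_sum_range]
  have hright := eq_add_sum_mul_mul_symm (fun k => eabs (AhatK ^ k)) (fun k => P (k + 1)) ΔK hleft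
  intro j hj
  obtain ⟨k, rfl⟩ : ∃ k, j = k + 1 := ⟨j - 1, by omega⟩
  exact Matrix.eq_mul_mul_of_eq_mul_sum (fun k => eabs (AhatK ^ k)) (fun k => P (k + 1)) ΔK ΔS F
    hF0 hFs hright k

/-- (Lemma 2) With `F 0 = Δ_S`, `F (j+1) = Δ_K Σ_{i=0}^{j} |Ahat_K^{j−i}| F i`,
`P 1 = I` and `P (j+1) = |Ahat_K^{j}| + Σ_{h=1}^{j} P h Δ_K |Ahat_K^{j−h}|` for `j ≥ 1`,
one has `F j = Δ_K P j Δ_S` for all `j ≥ 1`. -/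
theorem lemma2_F_eq_DeltaK_P_DeltaS {n m : ℕ}
    (AhatK ΔK : Matrix (Fin n) (Fin n) ℝ) (ΔS : Matrix (Fin n) (Fin (n + m)) ℝ)
    (hΔK : ∀ i j, 0 ≤ ΔK i j) (hΔS : ∀ i j, 0 ≤ ΔS i j)
    (F : ℕ → Matrix (Fin n) (Fin (n + m)) ℝ)
    (hF0 : F 0 = ΔS)
    (hFs : ∀ j, F (j + 1) = ΔK * ∑ i ∈ Finset.range (j + 1), eabs (AhatK ^ (j - i)) * F i)
    (P : ℕ → Matrix (Fin n) (Fin n) ℝ)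
    (hP1 : P 1 = 1)
    (hPs : ∀ j, 1 ≤ j →
      P (j + 1) = eabs (AhatK ^ j) + ∑ h ∈ Finset.Icc 1 j, P h * ΔK * eabs (AhatK ^ (j - h))) :
    ∀ j, 1 ≤ j → F j = ΔK * P j * ΔS :=
  lemma2_F_eq_DeltaK_P_DeltaS_general AhatK ΔK ΔS F hF0 hFs P hP1 hPs
end

section
/- Let Δ ∈ ℝ^{p×q} be entrywise nonnegative and ξ ∈ ℝ^{q}. Then {Eξ : E ∈ ℝ^{p×q}, |E| ≤ Δ entrywise} = {v ∈ ℝ^{p} : |v| ≤ Δ|ξ| entrywise}. In particular, for every v with |v| ≤ Δ|ξ| entrywise there exists E with |E| ≤ Δ entrywise and Eξ = v. -/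
open Matrix

section LinearOrderedRing

variable {α ι : Type*} [Ring α] [LinearOrder α] [IsStrictOrderedRing α] [Fintype ι]

theorem abs_dotProduct_le_of_abs_le {a b : ι → α} (h : ∀ j, |a j| ≤ b j) (x : ι → α) :
    |a ⬝ᵥ x| ≤ b ⬝ᵥ |x| :=
  calc |a ⬝ᵥ x| ≤ ∑ j, |a j * x j| := Finset.abs_sum_le_sum_abs _ _
    _ ≤ ∑ j, b j * |x j| := Finset.sum_le_sum fun j _ => by
      rw [abs_mul]
      exact mul_le_mul_of_nonneg_right (h j) (abs_nonneg _)

theorem abs_coe_sign_le_one (x : α) : |(SignType.sign x : α)| ≤ 1 := by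
  cases SignType.sign x <;> simp

theorem mul_sign_dotProduct_self (d x : ι → α) :
    (d * fun j => (SignType.sign (x j) : α)) ⬝ᵥ x = d ⬝ᵥ |x| :=
  Finset.sum_congr rfl fun j _ => by
    rw [Pi.mul_apply, mul_assoc, sign_mul_self, Pi.abs_apply]

end LinearOrderedRing

section LinearOrderedField

variable {α ι : Type*} [Field α] [LinearOrder α] [IsStrictOrderedRing α] [Fintype ι]

/-- The witness is `e = (t / s) • (d * sign x)` with `s = d ⬝ᵥ |x|`. When `s = 0` the hypothesis
forces `t = 0`, and the junk value `t / 0 = 0` gives `e = 0`, so no case split is needed. -/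
theorem exists_abs_le_dotProduct_eq {d x : ι → α} (hd : 0 ≤ d) {t : α} (ht : |t| ≤ d ⬝ᵥ |x|) :
    ∃ e : ι → α, (∀ j, |e j| ≤ d j) ∧ e ⬝ᵥ x = t := by
  set s := d ⬝ᵥ |x|
  have hs : 0 ≤ s := dotProduct_nonneg_of_nonneg hd (abs_nonneg x)
  have hts : |t / s| ≤ 1 := by
    rw [abs_div, abs_of_nonneg hs]
    exact div_le_one_of_le₀ ht hs
  refine ⟨(t / s) • (d * fun j => (SignType.sign (x j) : α)), fun j => ?_, ?_⟩
  · calc |(t / s) * (d j * SignType.sign (x j))|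
          = |t / s| * (d j * |(SignType.sign (x j) : α)|) := by
            rw [abs_mul, abs_mul, abs_of_nonneg (hd j)]
      _ ≤ 1 * d j :=
            mul_le_mul hts (mul_le_of_le_one_right (hd j) (abs_coe_sign_le_one _))
              (mul_nonneg (hd j) (abs_nonneg _)) zero_le_one
      _ = d j := one_mul _
  · rw [smul_dotProduct, mul_sign_dotProduct_self, smul_eq_mul]
    exact div_mul_cancel_of_imp fun h => abs_nonpos_iff.mp (h ▸ ht)

end LinearOrderedField

/-- For `Δ ≥ 0` entrywise and a vector `ξ`, the set `{Eξ : |E| ≤ Δ entrywise}` equals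
the set `{v : |v| ≤ Δ|ξ| entrywise}`. -/
theorem interval_matrix_image_of_vector {p q : ℕ}
    (Δ : Matrix (Fin p) (Fin q) ℝ) (hΔ : ∀ i j, 0 ≤ Δ i j) (ξ : Fin q → ℝ) :
    {v : Fin p → ℝ | ∃ E : Matrix (Fin p) (Fin q) ℝ,
        (∀ i j, |E i j| ≤ Δ i j) ∧ v = E.mulVec ξ}
      = {v : Fin p → ℝ | ∀ i, |v i| ≤ (Δ.mulVec fun j => |ξ j|) i} := by
  ext v
  constructor
  · rintro ⟨E, hE, rfl⟩ i
    exact abs_dotProduct_le_of_abs_le (hE i) ξ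
  · intro hv
    choose E hE hEξ using fun i => exists_abs_le_dotProduct_eq (hΔ i) (hv i)
    exact ⟨E, hE, funext fun i => (hEξ i).symm⟩
end

section
/- (Key inclusion in the proof of Theorem 1) Let Â_K ∈ ℝ^{n×n}, K ∈ ℝ^{m×n}, let Δ_S ∈ ℝ^{n×(n+m)} be entrywise nonnegative, set Δ_K = Δ_S · [I_n; |K|] ∈ ℝ^{n×n} (where [I_n; |K|] ∈ ℝ^{(n+m)×n} is the vertical stacking of the identity and |K|), and define F_j ∈ ℝ^{n×(n+m)} by F_0 = Δ_S and F_{j+1} = Δ_K Σ_{i=0}^{j} |Â_K^{j−i}| F_i for j ≥ 0, and set R_j = Σ_{i=0}^{j} |Â_K^{j−i}| F_i. Let M_K = [I_n; K] ∈ ℝ^{(n+m)×n} be the vertical stacking of the identity and K. Then for every j ≥ 1, every ξ ∈ ℝ^{n+m}, every δ ∈ ℝ^{n} with |δ| ≤ Δ_S|ξ| entrywise, and all matrices E_0, …, E_{j−1} ∈ ℝ^{n×(n+m)} with |E_i| ≤ R_{j−1−i} entrywise, one has |Â_K^{j} δ + Σ_{i=0}^{j−1} E_i M_K Â_K^{i}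 δ| ≤ R_j |ξ| entrywise. -/
open Finset

namespace Matrix

theorem abs_mulVec_apply_le {α p q : Type*} [Ring α] [LinearOrder α] [IsOrderedRing α]
    [Fintype q] {M N : Matrix p q α} {x y : q → α}
    (hMN : ∀ a b, |M a b| ≤ N a b) (hxy : ∀ b, |x b| ≤ y b) (a : p) :
    |(M *ᵥ x) a| ≤ (N *ᵥ y) a :=
  calc |(M *ᵥ x) a| ≤ ∑ b, |M a b * x b| := abs_sum_le_sum_abs _ _
    _ ≤ ∑ b, N a b * y b := by
        gcongr with b
        rw [abs_mul]
        exact mul_le_mul (hMN a b) (hxy b) (abs_nonneg _) ((abs_nonneg _).trans (hMN a b))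

section ConvThrough

variable {α n q : Type*} [NonUnitalSemiring α] [Fintype n] [Fintype q]

/-- The coefficient sequence of `z • a(z) * G * b(z)`. -/
def convThrough (G : Matrix q n α) (a b : ℕ → Matrix n q α) : ℕ → Matrix n q α
  | 0 => 0
  | j + 1 => ∑ x ∈ antidiagonal j, a x.1 * G * b x.2

variable (G : Matrix q n α)

theorem convThrough_eq_sum_range (a b : ℕ → Matrix n q α) (j : ℕ) :
    convThrough G a b j = ∑ i ∈ range j, a (j - 1 - i) * G * b i := by
  cases j with
  | zero => rfl
  | succ j =>
    rw [convThrough, ← Nat.sum_antidiagonal_swap]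
    simp only [Prod.fst_swap, Prod.snd_swap]
    rw [Nat.sum_antidiagonal_eq_sum_range_succ (fun k l => a l * G * b k)]
    simp

theorem add_convThrough (a b c : ℕ → Matrix n q α) :
    convThrough G (a + b) c = convThrough G a c + convThrough G b c := by
  funext j
  cases j <;> simp [convThrough, Matrix.add_mul, sum_add_distrib]

theorem convThrough_add (a b c : ℕ → Matrix n q α) :
    convThrough G a (b + c) = convThrough G a b + convThrough G a c := by
  funext j
  cases j <;> simp [convThrough, Matrix.mul_add, sum_add_distrib]

theorem convThrough_assoc (a b c : ℕ → Matrix n q α) :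
    convThrough G (convThrough G a b) c = convThrough G a (convThrough G b c) := by
  funext j
  rcases j with _ | _ | j
  · rfl
  · simp [convThrough]
  · rw [convThrough, convThrough, Nat.sum_antidiagonal_succ, Nat.sum_antidiagonal_succ']
    simp only [convThrough, Matrix.zero_mul, Matrix.mul_zero, zero_add, Matrix.sum_mul,
      Matrix.mul_sum, sum_sigma']
    apply sum_nbij' (fun ⟨⟨_i, j⟩, ⟨k, l⟩⟩ ↦ ⟨(k, l + j), (l, j)⟩)
      (fun ⟨⟨i, _j⟩, ⟨k, l⟩⟩ ↦ ⟨(i + k, l), (i, k)⟩) <;>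
      aesop (add simp [add_assoc, Matrix.mul_assoc])

theorem convThrough_congr_right {a b b' : ℕ → Matrix n q α} {j : ℕ}
    (h : ∀ i < j, b i = b' i) : convThrough G a b j = convThrough G a b' j := by
  simp only [convThrough_eq_sum_range]
  exact sum_congr rfl fun i hi => by rw [h i (mem_range.mp hi)]

theorem convThrough_comm_of_eq_add {t r : ℕ → Matrix n q α} (h : r = t + convThrough G t r) :
    convThrough G r t = convThrough G t r := by
  funext j
  induction j using Nat.strong_induction_on with
  | _ j ih =>
    calc convThrough G r t j
        = convThrough G t t j + convThrough G t (convThrough G r t) j := by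
          conv_lhs => rw [h]
          rw [add_convThrough, convThrough_assoc, Pi.add_apply]
      _ = convThrough G t t j + convThrough G t (convThrough G t r) j := by
          rw [convThrough_congr_right G ih]
      _ = convThrough G t r j := by
          rw [← Pi.add_apply, ← convThrough_add, ← h]

end ConvThrough

end Matrix

open Matrix

theorem eabs_fromRows_one {n m : Type*} [DecidableEq n] (K : Matrix m n ℝ) :
    eabs (fromRows (1 : Matrix n n ℝ) K) = fromRows 1 (eabs K) := by
  ext (b | b) c
  · by_cases h : b = c <;> simp [eabs, one_apply, h]
  · rfl

theorem abs_pow_mulVec_add_sum_apply_le {n q : Type*} [Fintype n] [DecidableEq n] [Fintype q]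
    {A : Matrix n n ℝ} {D : Matrix n q ℝ} {M G : Matrix q n ℝ} {E B : ℕ → Matrix n q ℝ}
    {δ : n → ℝ} {v : q → ℝ} {j : ℕ} (hδ : ∀ a, |δ a| ≤ (D *ᵥ v) a)
    (hM : ∀ b c, |M b c| ≤ G b c) (hE : ∀ i < j, ∀ a c, |E i a c| ≤ B i a c) (a : n) :
    |(A ^ j *ᵥ δ + ∑ i ∈ range j, (E i * M * A ^ i) *ᵥ δ) a|
      ≤ ((eabs (A ^ j) * D + ∑ i ∈ range j, B i * G * (eabs (A ^ i) * D)) *ᵥ v) a := by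
  have hpow : ∀ i b, |(A ^ i *ᵥ δ) b| ≤ ((eabs (A ^ i) * D) *ᵥ v) b := fun i b => by
    rw [← mulVec_mulVec]
    exact abs_mulVec_apply_le (fun _ _ => le_rfl) hδ b
  have hterm : ∀ i < j, ∀ b,
      |((E i * M * A ^ i) *ᵥ δ) b| ≤ ((B i * G * (eabs (A ^ i) * D)) *ᵥ v) b :=
    fun i hi b => by
      rw [← mulVec_mulVec, ← mulVec_mulVec, ← mulVec_mulVec, ← mulVec_mulVec]
      exact abs_mulVec_apply_le (hE i hi) (abs_mulVec_apply_le hM (hpow i)) b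
  rw [add_mulVec, sum_mulVec, Pi.add_apply, Pi.add_apply, Finset.sum_apply, Finset.sum_apply]
  calc |(A ^ j *ᵥ δ) a + ∑ i ∈ range j, ((E i * M * A ^ i) *ᵥ δ) a|
      ≤ |(A ^ j *ᵥ δ) a| + ∑ i ∈ range j, |((E i * M * A ^ i) *ᵥ δ) a| :=
        (abs_add_le _ _).trans (add_le_add_right (abs_sum_le_sum_abs _ _) _)
    _ ≤ _ := add_le_add (hpow j a) (sum_le_sum fun i hi => hterm i (mem_range.mp hi) a)

theorem key_inclusion_theorem1_general {n m : ℕ}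
    (AhatK : Matrix (Fin n) (Fin n) ℝ) (K : Matrix (Fin m) (Fin n) ℝ)
    (ΔS : Matrix (Fin n) (Fin n ⊕ Fin m) ℝ)
    (ΔK : Matrix (Fin n) (Fin n) ℝ)
    (hΔK : ΔK = ΔS * Matrix.fromRows (1 : Matrix (Fin n) (Fin n) ℝ) (eabs K))
    (F : ℕ → Matrix (Fin n) (Fin n ⊕ Fin m) ℝ)
    (hF0 : F 0 = ΔS)
    (hFs : ∀ j, F (j + 1) = ΔK * ∑ i ∈ Finset.range (j + 1), eabs (AhatK ^ (j - i)) * F i)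
    (R : ℕ → Matrix (Fin n) (Fin n ⊕ Fin m) ℝ)
    (hR : ∀ j, R j = ∑ i ∈ Finset.range (j + 1), eabs (AhatK ^ (j - i)) * F i)
    (MK : Matrix (Fin n ⊕ Fin m) (Fin n) ℝ)
    (hMK : MK = Matrix.fromRows (1 : Matrix (Fin n) (Fin n) ℝ) K) :
    ∀ j, 1 ≤ j → ∀ (ξ : Fin n ⊕ Fin m → ℝ) (δ : Fin n → ℝ),
      (∀ a, |δ a| ≤ (ΔS.mulVec fun c => |ξ c|) a) →
      ∀ E : ℕ → Matrix (Fin n) (Fin n ⊕ Fin m) ℝ,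
        (∀ i, i < j → ∀ a c, |E i a c| ≤ R (j - 1 - i) a c) →
        ∀ a, |((AhatK ^ j).mulVec δ
                + ∑ i ∈ Finset.range j, (E i * MK * AhatK ^ i).mulVec δ) a|
          ≤ ((R j).mulVec fun c => |ξ c|) a := by
  intro j _ ξ δ hδ E hE a
  set G := fromRows (1 : Matrix (Fin n) (Fin n) ℝ) (eabs K)
  set T : ℕ → Matrix (Fin n) (Fin n ⊕ Fin m) ℝ := fun i => eabs (AhatK ^ i) * ΔS
  have hRT : R = T + convThrough G T R := funext fun j => by
    rw [hR, sum_range_succ', hF0, add_comm, Pi.add_apply, convThrough_eq_sum_range]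
    refine congrArg _ (sum_congr rfl fun i hi => ?_)
    rw [hFs, ← hR, hΔK, show j - (i + 1) = j - 1 - i by omega]
    simp only [T, Matrix.mul_assoc]
  have hRj : R j = T j + ∑ i ∈ range j, R (j - 1 - i) * G * T i := by
    rw [← convThrough_eq_sum_range, convThrough_comm_of_eq_add G hRT]
    exact congrFun hRT j
  have hMK_le : ∀ b c, |MK b c| ≤ G b c := fun b c =>
    hMK ▸ (congrFun (congrFun (eabs_fromRows_one K) b) c).le
  rw [hRj]
  exact abs_pow_mulVec_add_sum_apply_le hδ hMK_le hE a

/-- (Key inclusion in the proof of Theorem 1) With `Δ_K = Δ_S [I; |K|]`,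
`F 0 = Δ_S`, `F (j+1) = Δ_K Σ_{i=0}^{j} |Ahat_K^{j−i}| F i`,
`R j = Σ_{i=0}^{j} |Ahat_K^{j−i}| F i` and `M_K = [I; K]`, for every `j ≥ 1`, every
`ξ`, every `δ` with `|δ| ≤ Δ_S|ξ|` and all `E₀, …, E_{j−1}` with
`|Eᵢ| ≤ R (j−1−i)` entrywise, one has
`|Ahat_K^j δ + Σ_{i=0}^{j−1} Eᵢ M_K Ahat_K^i δ| ≤ R j |ξ|` entrywise. -/
theorem key_inclusion_theorem1 {n m : ℕ}
    (AhatK : Matrix (Fin n) (Fin n) ℝ) (K : Matrix (Fin m) (Fin n) ℝ)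
    (ΔS : Matrix (Fin n) (Fin n ⊕ Fin m) ℝ) (hΔS : ∀ i j, 0 ≤ ΔS i j)
    (ΔK : Matrix (Fin n) (Fin n) ℝ)
    (hΔK : ΔK = ΔS * Matrix.fromRows (1 : Matrix (Fin n) (Fin n) ℝ) (eabs K))
    (F : ℕ → Matrix (Fin n) (Fin n ⊕ Fin m) ℝ)
    (hF0 : F 0 = ΔS)
    (hFs : ∀ j, F (j + 1) = ΔK * ∑ i ∈ Finset.range (j + 1), eabs (AhatK ^ (j - i)) * F i)
    (R : ℕ → Matrix (Fin n) (Fin n ⊕ Fin m) ℝ)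
    (hR : ∀ j, R j = ∑ i ∈ Finset.range (j + 1), eabs (AhatK ^ (j - i)) * F i)
    (MK : Matrix (Fin n ⊕ Fin m) (Fin n) ℝ)
    (hMK : MK = Matrix.fromRows (1 : Matrix (Fin n) (Fin n) ℝ) K) :
    ∀ j, 1 ≤ j → ∀ (ξ : Fin n ⊕ Fin m → ℝ) (δ : Fin n → ℝ),
      (∀ a, |δ a| ≤ (ΔS.mulVec fun c => |ξ c|) a) →
      ∀ E : ℕ → Matrix (Fin n) (Fin n ⊕ Fin m) ℝ,
        (∀ i, i < j → ∀ a c, |E i a c| ≤ R (j - 1 - i) a c) →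
        ∀ a, |((AhatK ^ j).mulVec δ
                + ∑ i ∈ Finset.range j, (E i * MK * AhatK ^ i).mulVec δ) a|
          ≤ ((R j).mulVec fun c => |ξ c|) a :=
  key_inclusion_theorem1_general AhatK K ΔS ΔK hΔK F hF0 hFs R hR MK hMK
end
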